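/- arXiv:2002.07836 — 2 statements merged into one kernel-verified Lean document; each statement's English description precedes it below -/
import Mathlib

section
/- Assume ‖∇l_S(v) − ∇l_T(v)‖ ≤ b for every v ∈ ℝ^d, and define the constants C_b = C_𝓛 = (αρ + (ρ/L)(1 + αL)^{N−1})(1 + αL)^{2N}. Then for every w, u ∈ ℝ^d the finite-sum meta gradient satisfies ‖G(w) − G(u)‖ ≤ ((1 + αL)^{2N} L + C_b b + C_𝓛 ‖∇l_T(w)‖) ‖w − u‖. -/
open MeasureTheory

noncomputable def innerPath {d : ℕ} (α : ℝ) (l : EuclideanSpace ℝ (Fin d) → ℝ) :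
    ℕ → EuclideanSpace ℝ (Fin d) → EuclideanSpace ℝ (Fin d)
  | 0, w => w
  | j + 1, w => innerPath α l j w - α • gradient l (innerPath α l j w)

noncomputable def hessProd {d : ℕ} (α : ℝ) (N : ℕ)
    (lS : EuclideanSpace ℝ (Fin d) → ℝ) (w : EuclideanSpace ℝ (Fin d)) :
    EuclideanSpace ℝ (Fin d) →L[ℝ] EuclideanSpace ℝ (Fin d) :=
  ((List.range N).map fun j =>
    ContinuousLinearMap.id ℝ (EuclideanSpace ℝ (Fin d)) -
      α • fderiv ℝ (gradient lS) (innerPath α lS j w)).prod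

noncomputable def metaGrad {d : ℕ} (α : ℝ) (N : ℕ)
    (lS lT : EuclideanSpace ℝ (Fin d) → ℝ) (w : EuclideanSpace ℝ (Fin d)) :
    EuclideanSpace ℝ (Fin d) :=
  hessProd α N lS w (gradient lT (innerPath α lS N w))

/-!
The meta gradient is an operator product `P(w)` applied to a vector `g(w)`, so
`G(w) - G(u) = (P(w) - P(u)) g(w) + P(u) (g(w) - g(u))`. One gradient step is
`(1 + αL)`-Lipschitz and multiplies `‖∇l_S‖` by at most `1 + αL`, so the inner path and every
factor `I - α∇²l_S` are controlled by powers of `1 + αL`. Telescoping the product against the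
`ρ`-Lipschitz Hessians along the two paths bounds `‖P(w) - P(u)‖`, and `‖g(w)‖` is bounded by
comparing `∇l_T` along the path with `∇l_S`, which differs from it by at most `b`.
-/

section DescentStep

variable {E : Type*} [NormedAddCommGroup E] [NormedSpace ℝ E] {f g : E → E} {α L : ℝ}

def descentStep (α : ℝ) (f : E → E) (x : E) : E := x - α • f x

lemma norm_descentStep_sub_self (hα : 0 ≤ α) (x : E) :
    ‖descentStep α f x - x‖ = α * ‖f x‖ := by
  rw [descentStep, sub_sub_cancel_left, norm_neg, norm_smul, Real.norm_of_nonneg hα]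

lemma norm_descentStep_sub_le (hα : 0 ≤ α) (hf : ∀ x y, ‖f x - f y‖ ≤ L * ‖x - y‖) (x y : E) :
    ‖descentStep α f x - descentStep α f y‖ ≤ (1 + α * L) * ‖x - y‖ := by
  have hxy : descentStep α f x - descentStep α f y = (x - y) - α • (f x - f y) := by
    simp only [descentStep, smul_sub]
    abel
  calc ‖descentStep α f x - descentStep α f y‖ ≤ ‖x - y‖ + α * ‖f x - f y‖ := by
        rw [hxy, ← norm_smul_of_nonneg hα]
        exact norm_sub_le _ _
    _ ≤ ‖x - y‖ + α * (L * ‖x - y‖) := by gcongr; exact hf x y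
    _ = (1 + α * L) * ‖x - y‖ := by ring

lemma norm_iterate_descentStep_sub_le (hα : 0 ≤ α) (hL : 0 ≤ L)
    (hf : ∀ x y, ‖f x - f y‖ ≤ L * ‖x - y‖) (j : ℕ) (x y : E) :
    ‖(descentStep α f)^[j] x - (descentStep α f)^[j] y‖ ≤ (1 + α * L) ^ j * ‖x - y‖ := by
  induction j with
  | zero => simp
  | succ j ih =>
    rw [Function.iterate_succ_apply', Function.iterate_succ_apply', pow_succ', mul_assoc]
    exact (norm_descentStep_sub_le hα hf _ _).trans (by gcongr)

lemma norm_apply_descentStep_le (hα : 0 ≤ α) (hf : ∀ x y, ‖f x - f y‖ ≤ L * ‖x - y‖) (x : E) :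
    ‖f (descentStep α f x)‖ ≤ (1 + α * L) * ‖f x‖ := by
  calc ‖f (descentStep α f x)‖ ≤ ‖f x‖ + ‖f (descentStep α f x) - f x‖ := norm_le_insert' _ _
    _ ≤ ‖f x‖ + L * (α * ‖f x‖) := by
      rw [← norm_descentStep_sub_self hα]
      gcongr
      exact hf _ _
    _ = (1 + α * L) * ‖f x‖ := by ring

lemma norm_apply_iterate_descentStep_le (hα : 0 ≤ α) (hL : 0 ≤ L)
    (hf : ∀ x y, ‖f x - f y‖ ≤ L * ‖x - y‖) (j : ℕ) (x : E) :
    ‖f ((descentStep α f)^[j] x)‖ ≤ (1 + α * L) ^ j * ‖f x‖ := by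
  induction j with
  | zero => simp
  | succ j ih =>
    rw [Function.iterate_succ_apply', pow_succ', mul_assoc]
    exact (norm_apply_descentStep_le hα hf _).trans (by gcongr)

lemma mul_norm_iterate_descentStep_sub_self_le (hα : 0 ≤ α) (hL : 0 ≤ L)
    (hf : ∀ x y, ‖f x - f y‖ ≤ L * ‖x - y‖) (j : ℕ) (x : E) :
    L * ‖(descentStep α f)^[j] x - x‖ ≤ ((1 + α * L) ^ j - 1) * ‖f x‖ := by
  induction j with
  | zero => simp
  | succ j ih =>
    set y := (descentStep α f)^[j] x
    have hstep : ‖(descentStep α f)^[j + 1] x - x‖ ≤ ‖y - x‖ + α * ‖f y‖ := by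
      rw [Function.iterate_succ_apply', ← norm_descentStep_sub_self hα y, add_comm,
        ← sub_add_sub_cancel _ y x]
      exact norm_add_le _ _
    calc L * ‖(descentStep α f)^[j + 1] x - x‖ ≤ L * ‖y - x‖ + α * L * ‖f y‖ :=
          (mul_le_mul_of_nonneg_left hstep hL).trans_eq (by ring)
      _ ≤ ((1 + α * L) ^ j - 1) * ‖f x‖ + α * L * ((1 + α * L) ^ j * ‖f x‖) :=
          add_le_add ih (by gcongr; exact norm_apply_iterate_descentStep_le hα hL hf j x)
      _ = ((1 + α * L) ^ (j + 1) - 1) * ‖f x‖ := by ring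

lemma norm_apply_iterate_descentStep_le_of_norm_sub_le (hα : 0 ≤ α) (hL : 0 ≤ L)
    (hf : ∀ x y, ‖f x - f y‖ ≤ L * ‖x - y‖) (hg : ∀ x y, ‖g x - g y‖ ≤ L * ‖x - y‖)
    {b : ℝ} {x : E} (hfg : ‖f x - g x‖ ≤ b) (j : ℕ) :
    ‖g ((descentStep α f)^[j] x)‖ ≤ (1 + α * L) ^ j * (b + ‖g x‖) := by
  have hc : 1 ≤ (1 + α * L) ^ j := one_le_pow₀ (le_add_of_nonneg_right (mul_nonneg hα hL))
  have hfx : ‖f x‖ ≤ b + ‖g x‖ := by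
    linarith [norm_le_insert' (f x) (g x)]
  calc ‖g ((descentStep α f)^[j] x)‖
      ≤ ‖g x‖ + L * ‖(descentStep α f)^[j] x - x‖ :=
        (norm_le_insert' _ _).trans (add_le_add_right (hg _ _) _)
    _ ≤ ‖g x‖ + ((1 + α * L) ^ j - 1) * (b + ‖g x‖) :=
        add_le_add_right ((mul_norm_iterate_descentStep_sub_self_le hα hL hf j x).trans
          (mul_le_mul_of_nonneg_left hfx (sub_nonneg.2 hc))) _
    _ ≤ (1 + α * L) ^ j * (b + ‖g x‖) := by
      linarith [(norm_nonneg _).trans hfg]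

end DescentStep

section OperatorProducts

variable {𝕜 E F : Type*} [NontriviallyNormedField 𝕜] [NormedAddCommGroup E] [NormedSpace 𝕜 E]
  [NormedAddCommGroup F] [NormedSpace 𝕜 F]

lemma ContinuousLinearMap.norm_apply_sub_apply_le (P Q : E →L[𝕜] F) (x y : E) :
    ‖P x - Q y‖ ≤ ‖P - Q‖ * ‖x‖ + ‖Q‖ * ‖x - y‖ := by
  have hsplit : P x - Q y = (P - Q) x + Q (x - y) := by
    simp only [sub_apply, map_sub]
    abel
  rw [hsplit]
  exact (norm_add_le _ _).trans (add_le_add ((P - Q).le_opNorm x) (Q.le_opNorm _))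

variable {A B : ℕ → E →L[𝕜] E} {c ε : ℝ}

lemma norm_prod_range_map_le (hA : ∀ j, ‖A j‖ ≤ c) (n : ℕ) :
    ‖((List.range n).map A).prod‖ ≤ c ^ n := by
  have hc : 0 ≤ c := (norm_nonneg _).trans (hA 0)
  induction n with
  | zero => exact ContinuousLinearMap.norm_id_le
  | succ n ih =>
    rw [List.prod_range_succ, pow_succ]
    exact (norm_mul_le _ _).trans (mul_le_mul ih (hA n) (norm_nonneg _) (by positivity))

/-- The factor `c - 1` clears the denominator of the geometric sum `∑_{j<n} c ^ j`. -/
lemma mul_norm_prod_range_map_sub_le (hc : 1 ≤ c) (hA : ∀ j, ‖A j‖ ≤ c) (hB : ∀ j, ‖B j‖ ≤ c)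
    (hAB : ∀ j, ‖A j - B j‖ ≤ ε * c ^ j) (n : ℕ) :
    c * (c - 1) * ‖((List.range n).map A).prod - ((List.range n).map B).prod‖ ≤
      ε * (c ^ n - 1) * c ^ n := by
  induction n with
  | zero => simp
  | succ n ih =>
    set PA := ((List.range n).map A).prod
    set PB := ((List.range n).map B).prod
    have hsplit : PA * A n - PB * B n = (PA - PB) * A n + PB * (A n - B n) := by
      noncomm_ring
    have hnorm : ‖PA * A n - PB * B n‖ ≤ ‖PA - PB‖ * c + c ^ n * (ε * c ^ n) := by
      rw [hsplit]
      refine (norm_add_le _ _).trans (add_le_add ?_ ?_)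
      · exact (norm_mul_le _ _).trans (by gcongr; exact hA n)
      · exact (norm_mul_le _ _).trans (mul_le_mul (norm_prod_range_map_le hB n) (hAB n)
          (norm_nonneg _) (by positivity))
    rw [List.prod_range_succ, List.prod_range_succ]
    have hc0 : 0 ≤ c * (c - 1) := mul_nonneg (by linarith) (by linarith)
    calc c * (c - 1) * ‖PA * A n - PB * B n‖
        ≤ c * (c * (c - 1) * ‖PA - PB‖) + c * (c - 1) * (c ^ n * (ε * c ^ n)) :=
          (mul_le_mul_of_nonneg_left hnorm hc0).trans_eq (by ring)
      _ ≤ c * (ε * (c ^ n - 1) * c ^ n) + c * (c - 1) * (c ^ n * (ε * c ^ n)) := by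
          gcongr
      _ = ε * (c ^ (n + 1) - 1) * c ^ (n + 1) := by ring

end OperatorProducts

section MetaGradient

variable {d : ℕ} {α L ρ : ℝ} {lS : EuclideanSpace ℝ (Fin d) → ℝ}

lemma innerPath_eq_iterate (α : ℝ) (l : EuclideanSpace ℝ (Fin d) → ℝ) (j : ℕ)
    (w : EuclideanSpace ℝ (Fin d)) :
    innerPath α l j w = (descentStep α (gradient l))^[j] w := by
  induction j with
  | zero => rfl
  | succ j ih =>
    rw [Function.iterate_succ_apply', ← ih]
    rfl

lemma norm_id_sub_smul_fderiv_le {E : Type*} [NormedAddCommGroup E] [NormedSpace ℝ E]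
    {f : E → E} (hα : 0 ≤ α) (hL : 0 ≤ L) (hf : ∀ x y, ‖f x - f y‖ ≤ L * ‖x - y‖) (x : E) :
    ‖ContinuousLinearMap.id ℝ E - α • fderiv ℝ f x‖ ≤ 1 + α * L := by
  have hfx : ‖fderiv ℝ f x‖ ≤ L :=
    norm_fderiv_le_of_lip' ℝ hL (Filter.Eventually.of_forall fun y => hf y x)
  calc ‖ContinuousLinearMap.id ℝ E - α • fderiv ℝ f x‖
      ≤ ‖ContinuousLinearMap.id ℝ E‖ + α * ‖fderiv ℝ f x‖ := by
        rw [← norm_smul_of_nonneg hα]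
        exact norm_sub_le _ _
    _ ≤ 1 + α * L := by gcongr; exact ContinuousLinearMap.norm_id_le

lemma norm_hessProd_le (hα : 0 ≤ α) (hL : 0 ≤ L)
    (hgrad : ∀ w u, ‖gradient lS w - gradient lS u‖ ≤ L * ‖w - u‖) (N : ℕ)
    (w : EuclideanSpace ℝ (Fin d)) :
    ‖hessProd α N lS w‖ ≤ (1 + α * L) ^ N :=
  norm_prod_range_map_le (fun _ => norm_id_sub_smul_fderiv_le hα hL hgrad _) N

lemma norm_hessProd_sub_le (hα : 0 < α) (hL : 0 < L) (hρ : 0 ≤ ρ)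
    (hgrad : ∀ w u, ‖gradient lS w - gradient lS u‖ ≤ L * ‖w - u‖)
    (hhess : ∀ w u, ‖fderiv ℝ (gradient lS) w - fderiv ℝ (gradient lS) u‖ ≤ ρ * ‖w - u‖)
    (N : ℕ) (w u : EuclideanSpace ℝ (Fin d)) :
    ‖hessProd α N lS w - hessProd α N lS u‖ ≤
      ρ / L * (1 + α * L) ^ (N - 1) * (1 + α * L) ^ N * ‖w - u‖ := by
  set c := 1 + α * L with hc_def
  have hc : 1 ≤ c := le_add_of_nonneg_right (mul_pos hα hL).le
  have hfactor := norm_id_sub_smul_fderiv_le hα.le hL.le hgrad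
  have hAB : ∀ j, ‖(ContinuousLinearMap.id ℝ _ - α • fderiv ℝ (gradient lS) (innerPath α lS j w)) -
      (ContinuousLinearMap.id ℝ _ - α • fderiv ℝ (gradient lS) (innerPath α lS j u))‖ ≤
        α * ρ * ‖w - u‖ * c ^ j := by
    intro j
    rw [sub_sub_sub_cancel_left]
    calc ‖α • fderiv ℝ (gradient lS) (innerPath α lS j u) -
          α • fderiv ℝ (gradient lS) (innerPath α lS j w)‖
        = α * ‖fderiv ℝ (gradient lS) (innerPath α lS j u) -
            fderiv ℝ (gradient lS) (innerPath α lS j w)‖ :=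
          (congrArg norm (smul_sub α _ _).symm).trans (norm_smul_of_nonneg hα.le _)
      _ ≤ α * (ρ * (c ^ j * ‖u - w‖)) := by
          gcongr
          refine (hhess _ _).trans (mul_le_mul_of_nonneg_left ?_ hρ)
          simpa only [innerPath_eq_iterate] using
            norm_iterate_descentStep_sub_le hα.le hL.le hgrad j u w
      _ = α * ρ * ‖w - u‖ * c ^ j := by rw [norm_sub_rev]; ring
  have hprod := mul_norm_prod_range_map_sub_le hc (fun _ => hfactor _) (fun _ => hfactor _) hAB N
  have hcN : c ^ N - 1 ≤ c * c ^ (N - 1) := by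
    rw [← pow_succ']
    linarith [pow_le_pow_right₀ hc (show N ≤ N - 1 + 1 by omega)]
  have hpos : 0 < c * (α * L) := by positivity
  refine le_of_mul_le_mul_left ?_ hpos
  calc c * (α * L) * ‖hessProd α N lS w - hessProd α N lS u‖
      ≤ α * ρ * ‖w - u‖ * (c ^ N - 1) * c ^ N := by
        rwa [show α * L = c - 1 by rw [hc_def]; ring]
    _ ≤ α * ρ * ‖w - u‖ * (c * c ^ (N - 1)) * c ^ N := by gcongr
    _ = c * (α * L) * (ρ / L * c ^ (N - 1) * c ^ N * ‖w - u‖) := by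
        field_simp

end MetaGradient

theorem stmt13_general {d : ℕ} (α L ρ b : ℝ) (hα : 0 < α) (hL : 0 < L) (hρ : 0 < ρ) (N : ℕ)
    (lS lT : EuclideanSpace ℝ (Fin d) → ℝ)
    (hgradS : ∀ w u : EuclideanSpace ℝ (Fin d), ‖gradient lS w - gradient lS u‖ ≤ L * ‖w - u‖)
    (hgradT : ∀ w u : EuclideanSpace ℝ (Fin d), ‖gradient lT w - gradient lT u‖ ≤ L * ‖w - u‖)
    (hhessS : ∀ w u : EuclideanSpace ℝ (Fin d),
      ‖fderiv ℝ (gradient lS) w - fderiv ℝ (gradient lS) u‖ ≤ ρ * ‖w - u‖)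
    (hdiffb : ∀ v : EuclideanSpace ℝ (Fin d), ‖gradient lS v - gradient lT v‖ ≤ b) :
    ∀ w u : EuclideanSpace ℝ (Fin d),
      ‖metaGrad α N lS lT w - metaGrad α N lS lT u‖ ≤
        ((1 + α * L) ^ (2 * N) * L +
          ((α * ρ + (ρ / L) * (1 + α * L) ^ (N - 1)) * (1 + α * L) ^ (2 * N)) * b +
          ((α * ρ + (ρ / L) * (1 + α * L) ^ (N - 1)) * (1 + α * L) ^ (2 * N)) *
            ‖gradient lT w‖) * ‖w - u‖ := by
  intro w u
  set c := 1 + α * L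
  have hbw : 0 ≤ b + ‖gradient lT w‖ :=
    add_nonneg ((norm_nonneg _).trans (hdiffb w)) (norm_nonneg _)
  have hΔP := norm_hessProd_sub_le hα hL hρ.le hgradS hhessS N w u
  have hP := norm_hessProd_le hα.le hL.le hgradS N u
  have hg : ‖gradient lT (innerPath α lS N w)‖ ≤ c ^ N * (b + ‖gradient lT w‖) := by
    rw [innerPath_eq_iterate]
    exact norm_apply_iterate_descentStep_le_of_norm_sub_le hα.le hL.le hgradS hgradT (hdiffb w) N
  have hΔg : ‖gradient lT (innerPath α lS N w) - gradient lT (innerPath α lS N u)‖ ≤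
      L * (c ^ N * ‖w - u‖) := by
    refine (hgradT _ _).trans (mul_le_mul_of_nonneg_left ?_ hL.le)
    simpa only [innerPath_eq_iterate] using
      norm_iterate_descentStep_sub_le hα.le hL.le hgradS N w u
  have hslack : 0 ≤ α * ρ * (c ^ N * c ^ N) * (b + ‖gradient lT w‖) * ‖w - u‖ :=
    mul_nonneg (mul_nonneg (by positivity) hbw) (norm_nonneg _)
  calc ‖metaGrad α N lS lT w - metaGrad α N lS lT u‖
      ≤ ‖hessProd α N lS w - hessProd α N lS u‖ * ‖gradient lT (innerPath α lS N w)‖ +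
          ‖hessProd α N lS u‖ *
            ‖gradient lT (innerPath α lS N w) - gradient lT (innerPath α lS N u)‖ :=
        ContinuousLinearMap.norm_apply_sub_apply_le _ _ _ _
    _ ≤ (ρ / L * c ^ (N - 1) * c ^ N * ‖w - u‖) * (c ^ N * (b + ‖gradient lT w‖)) +
          c ^ N * (L * (c ^ N * ‖w - u‖)) :=
        add_le_add (mul_le_mul hΔP hg (norm_nonneg _) (by positivity))
          (mul_le_mul hP hΔg (norm_nonneg _) (by positivity))
    _ ≤ _ := by
        rw [two_mul, pow_add]
        linarith

theorem stmt13 {d : ℕ} (hd : 1 ≤ d) (α L ρ b : ℝ) (hα : 0 < α) (hL : 0 < L) (hρ : 0 < ρ)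
    (hb : 0 ≤ b) (N : ℕ) (hN : 1 ≤ N)
    (lS lT : EuclideanSpace ℝ (Fin d) → ℝ) (hlS : ContDiff ℝ 2 lS) (hlT : ContDiff ℝ 2 lT)
    (hgradS : ∀ w u : EuclideanSpace ℝ (Fin d), ‖gradient lS w - gradient lS u‖ ≤ L * ‖w - u‖)
    (hgradT : ∀ w u : EuclideanSpace ℝ (Fin d), ‖gradient lT w - gradient lT u‖ ≤ L * ‖w - u‖)
    (hhessS : ∀ w u : EuclideanSpace ℝ (Fin d),
      ‖fderiv ℝ (gradient lS) w - fderiv ℝ (gradient lS) u‖ ≤ ρ * ‖w - u‖)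
    (hhessT : ∀ w u : EuclideanSpace ℝ (Fin d),
      ‖fderiv ℝ (gradient lT) w - fderiv ℝ (gradient lT) u‖ ≤ ρ * ‖w - u‖)
    (hdiffb : ∀ v : EuclideanSpace ℝ (Fin d), ‖gradient lS v - gradient lT v‖ ≤ b) :
    ∀ w u : EuclideanSpace ℝ (Fin d),
      ‖metaGrad α N lS lT w - metaGrad α N lS lT u‖ ≤
        ((1 + α * L) ^ (2 * N) * L +
          ((α * ρ + (ρ / L) * (1 + α * L) ^ (N - 1)) * (1 + α * L) ^ (2 * N)) * b +
          ((α * ρ + (ρ / L) * (1 + α * L) ^ (N - 1)) * (1 + α * L) ^ (2 * N)) *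
            ‖gradient lT w‖) * ‖w - u‖ :=
  stmt13_general α L ρ b hα hL hρ N lS lT hgradS hgradT hhessS hdiffb
end

section
/- Assume α < (2^{1/(2N)} − 1)/L, so that C₁ := 2 − (1 + αL)^{2N} > 0. Assume the bounded-variance condition ∫_I ‖∇l_{Tᵢ}(w) − ∇l_T(w)‖² dμ(i) ≤ σ² for every w ∈ ℝ^d, where ∇l_T(w) = ∫_I ∇l_{Tᵢ}(w) dμ(i), and assume ‖∇l_{Sᵢ}(v) − ∇l_{Tᵢ}(v)‖ ≤ bᵢ for each i and all v, with b = ∫_I bᵢ dμ(i). Define C₂ = ((1 + αL)^{2N} − 1)σ + (1 + αL)^N ((1 + αL)^N − 1) b and ∇𝓛(w) = ∫_I Gᵢ(w) dμ(i). Then for every w ∈ ℝ^d, ‖∇l_T(w)‖ ≤ (1/C₁) ‖∇𝓛(w)‖ + C₂/C₁. -/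
open MeasureTheory

/-!
The Hessian product `P = ∏ (1 - α ∇²l_S(w̃ⱼ))` satisfies `‖P - 1‖ ≤ (1 + αL)^N - 1`, and the inner
path moves `∇l_T` by at most `((1 + αL)^N - 1) ‖∇l_S(w)‖`. Writing
`Gᵢ - ∇l_{Tᵢ} = P (∇l_{Tᵢ}(w̃_N) - ∇l_{Tᵢ}(w)) + (P - 1) ∇l_{Tᵢ}(w)` gives, per task,
`‖Gᵢ(w) - ∇l_{Tᵢ}(w)‖ ≤ ((1 + αL)^{2N} - 1) ‖∇l_{Tᵢ}(w)‖ + (1 + αL)^N ((1 + αL)^N - 1) bᵢ`.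
Averaging over tasks and bounding `∫ ‖∇l_{Tᵢ}(w)‖` by `σ + ‖∇l_T(w)‖` (Jensen plus the variance
bound) yields `C₁ ‖∇l_T(w)‖ ≤ ‖∇𝓛(w)‖ + C₂`; the step-size condition says exactly `C₁ > 0`.
-/

theorem norm_le_of_norm_sub_one_le {R : Type*} [SeminormedRing R] (h1 : ‖(1 : R)‖ ≤ 1) {a : R}
    {δ : ℝ} (h : ‖a - 1‖ ≤ δ) : ‖a‖ ≤ 1 + δ :=
  calc ‖a‖ = ‖(a - 1) + 1‖ := by rw [sub_add_cancel]
    _ ≤ ‖a - 1‖ + ‖(1 : R)‖ := norm_add_le _ _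
    _ ≤ 1 + δ := by linarith

theorem List.norm_prod_sub_one_le {R : Type*} [SeminormedRing R] (h1 : ‖(1 : R)‖ ≤ 1) {δ : ℝ}
    (l : List R) (h : ∀ a ∈ l, ‖a - 1‖ ≤ δ) : ‖l.prod - 1‖ ≤ (1 + δ) ^ l.length - 1 := by
  induction l with
  | nil => simp
  | cons a l ih =>
    have ha : ‖a - 1‖ ≤ δ := h a List.mem_cons_self
    have ih := ih fun x hx => h x (List.mem_cons_of_mem a hx)
    calc ‖(a :: l).prod - 1‖ = ‖a * (l.prod - 1) + (a - 1)‖ := by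
          rw [List.prod_cons]; noncomm_ring
      _ ≤ ‖a‖ * ‖l.prod - 1‖ + ‖a - 1‖ := (norm_add_le _ _).trans (by gcongr; exact norm_mul_le _ _)
      _ ≤ (1 + δ) * ((1 + δ) ^ l.length - 1) + δ :=
          add_le_add (mul_le_mul (norm_le_of_norm_sub_one_le h1 ha) ih (norm_nonneg _)
            (by linarith [norm_nonneg (a - 1)])) ha
      _ = (1 + δ) ^ (a :: l).length - 1 := by rw [List.length_cons]; ring

section InnerPath

variable {d : ℕ} {α L : ℝ} {l : EuclideanSpace ℝ (Fin d) → ℝ}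

theorem norm_innerPath_succ_sub (hα : 0 ≤ α) (w : EuclideanSpace ℝ (Fin d)) (j : ℕ) :
    ‖innerPath α l (j + 1) w - innerPath α l j w‖ = α * ‖gradient l (innerPath α l j w)‖ := by
  rw [innerPath, sub_sub_cancel_left, norm_neg, norm_smul, Real.norm_of_nonneg hα]

theorem norm_gradient_innerPath_le (hα : 0 ≤ α) (hL : 0 ≤ L)
    (hlip : ∀ x y, ‖gradient l x - gradient l y‖ ≤ L * ‖x - y‖)
    (w : EuclideanSpace ℝ (Fin d)) (j : ℕ) :
    ‖gradient l (innerPath α l j w)‖ ≤ (1 + α * L) ^ j * ‖gradient l w‖ := by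
  induction j with
  | zero => simp [innerPath]
  | succ j ih =>
    calc ‖gradient l (innerPath α l (j + 1) w)‖
        ≤ ‖gradient l (innerPath α l j w)‖
          + L * ‖innerPath α l (j + 1) w - innerPath α l j w‖ := by
          have := hlip (innerPath α l (j + 1) w) (innerPath α l j w)
          linarith [norm_le_norm_add_norm_sub' (gradient l (innerPath α l (j + 1) w))
            (gradient l (innerPath α l j w))]
      _ = (1 + α * L) * ‖gradient l (innerPath α l j w)‖ := by
          rw [norm_innerPath_succ_sub hα]; ring
      _ ≤ (1 + α * L) * ((1 + α * L) ^ j * ‖gradient l w‖) := by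
          gcongr
      _ = (1 + α * L) ^ (j + 1) * ‖gradient l w‖ := by ring

theorem mul_norm_innerPath_sub_le (hα : 0 ≤ α) (hL : 0 ≤ L)
    (hlip : ∀ x y, ‖gradient l x - gradient l y‖ ≤ L * ‖x - y‖)
    (w : EuclideanSpace ℝ (Fin d)) (j : ℕ) :
    L * ‖innerPath α l j w - w‖ ≤ ((1 + α * L) ^ j - 1) * ‖gradient l w‖ := by
  induction j with
  | zero => simp [innerPath]
  | succ j ih =>
    calc L * ‖innerPath α l (j + 1) w - w‖
        ≤ L * ‖innerPath α l j w - w‖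
          + L * ‖innerPath α l (j + 1) w - innerPath α l j w‖ := by
          rw [← mul_add]
          exact mul_le_mul_of_nonneg_left ((norm_sub_le_norm_sub_add_norm_sub
            (innerPath α l (j + 1) w) (innerPath α l j w) w).trans_eq (add_comm _ _)) hL
      _ ≤ ((1 + α * L) ^ j - 1) * ‖gradient l w‖
          + α * L * ((1 + α * L) ^ j * ‖gradient l w‖) := by
          rw [norm_innerPath_succ_sub hα, ← mul_assoc, mul_comm L α]
          exact add_le_add ih (mul_le_mul_of_nonneg_left
            (norm_gradient_innerPath_le hα hL hlip w j) (mul_nonneg hα hL))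
      _ = ((1 + α * L) ^ (j + 1) - 1) * ‖gradient l w‖ := by ring

theorem norm_hessProd_sub_one_le (hα : 0 ≤ α) (hL : 0 ≤ L)
    (hlip : ∀ x y, ‖gradient l x - gradient l y‖ ≤ L * ‖x - y‖)
    (N : ℕ) (w : EuclideanSpace ℝ (Fin d)) :
    ‖hessProd α N l w - 1‖ ≤ (1 + α * L) ^ N - 1 := by
  have hfactor : ∀ x, ‖(ContinuousLinearMap.id ℝ _ - α • fderiv ℝ (gradient l) x) - 1‖ ≤ α * L := by
    intro x
    rw [ContinuousLinearMap.one_def, sub_sub_cancel_left, norm_neg, norm_smul,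
      Real.norm_of_nonneg hα]
    gcongr
    exact norm_fderiv_le_of_lip' ℝ hL (Filter.Eventually.of_forall fun y => hlip y x)
  unfold hessProd
  refine (List.norm_prod_sub_one_le (δ := α * L) ContinuousLinearMap.norm_id_le _ ?_).trans_eq
    (by simp)
  simp only [List.forall_mem_map]
  exact fun j _ => hfactor _

end InnerPath

theorem norm_metaGrad_sub_gradient_le {d : ℕ} {α L b : ℝ} (hα : 0 ≤ α) (hL : 0 ≤ L) (N : ℕ)
    {lS lT : EuclideanSpace ℝ (Fin d) → ℝ}
    (hlipS : ∀ x y, ‖gradient lS x - gradient lS y‖ ≤ L * ‖x - y‖)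
    (hlipT : ∀ x y, ‖gradient lT x - gradient lT y‖ ≤ L * ‖x - y‖)
    (hST : ∀ v, ‖gradient lS v - gradient lT v‖ ≤ b) (w : EuclideanSpace ℝ (Fin d)) :
    ‖metaGrad α N lS lT w - gradient lT w‖ ≤
      ((1 + α * L) ^ (2 * N) - 1) * ‖gradient lT w‖ +
        (1 + α * L) ^ N * ((1 + α * L) ^ N - 1) * b := by
  set P := hessProd α N lS w
  set g := gradient lT w
  set g' := gradient lT (innerPath α lS N w)
  have hP1 : ‖P - 1‖ ≤ (1 + α * L) ^ N - 1 := norm_hessProd_sub_one_le hα hL hlipS N w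
  have hP : ‖P‖ ≤ (1 + α * L) ^ N := by
    simpa using norm_le_of_norm_sub_one_le ContinuousLinearMap.norm_id_le hP1
  have hgS : ‖gradient lS w‖ ≤ ‖g‖ + b := by
    linarith [norm_le_norm_add_norm_sub' (gradient lS w) g, hST w]
  have hdrift : ‖g' - g‖ ≤ ((1 + α * L) ^ N - 1) * (‖g‖ + b) :=
    calc ‖g' - g‖ ≤ L * ‖innerPath α lS N w - w‖ := hlipT _ _
      _ ≤ ((1 + α * L) ^ N - 1) * ‖gradient lS w‖ := mul_norm_innerPath_sub_le hα hL hlipS w N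
      _ ≤ ((1 + α * L) ^ N - 1) * (‖g‖ + b) := by
          gcongr
          linarith [one_le_pow₀ (n := N) (by nlinarith : (1 : ℝ) ≤ 1 + α * L)]
  have hsplit : metaGrad α N lS lT w - g = P (g' - g) + (P - 1) g := by
    change P g' - g = _
    rw [map_sub, sub_apply, one_apply_eq_self]
    abel
  calc ‖metaGrad α N lS lT w - g‖ = ‖P (g' - g) + (P - 1) g‖ := by rw [hsplit]
    _ ≤ ‖P‖ * ‖g' - g‖ + ‖P - 1‖ * ‖g‖ :=
        (norm_add_le _ _).trans (add_le_add (P.le_opNorm _) ((P - 1).le_opNorm _))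
    _ ≤ (1 + α * L) ^ N * (((1 + α * L) ^ N - 1) * (‖g‖ + b)) + ((1 + α * L) ^ N - 1) * ‖g‖ := by
        gcongr
    _ = ((1 + α * L) ^ (2 * N) - 1) * ‖g‖ + (1 + α * L) ^ N * ((1 + α * L) ^ N - 1) * b := by
        ring

theorem one_add_mul_pow_two_mul_lt_two {α L : ℝ} (hα : 0 ≤ α) (hL : 0 < L) {N : ℕ} (hN : 1 ≤ N)
    (hαsmall : α < ((2 : ℝ) ^ ((1 : ℝ) / (2 * (N : ℝ))) - 1) / L) :
    (1 + α * L) ^ (2 * N) < 2 := by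
  have hroot : ((2 : ℝ) ^ ((1 : ℝ) / (2 * (N : ℝ)))) ^ (2 * N) = 2 := by
    rw [← Real.rpow_natCast, ← Real.rpow_mul zero_le_two]
    have : (2 * N : ℝ) ≠ 0 := by positivity
    push_cast
    rw [one_div_mul_cancel this, Real.rpow_one]
  calc (1 + α * L) ^ (2 * N) < ((2 : ℝ) ^ ((1 : ℝ) / (2 * (N : ℝ)))) ^ (2 * N) := by
        gcongr
        linarith [(lt_div_iff₀ hL).mp hαsmall]
    _ = 2 := hroot

section Integral

variable {I E : Type*} [MeasurableSpace I] {μ : Measure I} [NormedAddCommGroup E]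

theorem norm_integral_le_norm_integral_add_integral_norm_sub [NormedSpace ℝ E] {f g : I → E}
    (hf : Integrable f μ) (hg : Integrable g μ) :
    ‖∫ i, g i ∂μ‖ ≤ ‖∫ i, f i ∂μ‖ + ∫ i, ‖f i - g i‖ ∂μ :=
  calc ‖∫ i, g i ∂μ‖ = ‖(∫ i, f i ∂μ) - ∫ i, (f i - g i) ∂μ‖ := by
        rw [integral_sub hf hg, sub_sub_cancel]
    _ ≤ ‖∫ i, f i ∂μ‖ + ‖∫ i, (f i - g i) ∂μ‖ := norm_sub_le _ _
    _ ≤ ‖∫ i, f i ∂μ‖ + ∫ i, ‖f i - g i‖ ∂μ := by gcongr; exact norm_integral_le_integral_norm _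

theorem integral_le_of_integral_sq_le [IsProbabilityMeasure μ] {f : I → ℝ} (hf : MemLp f 2 μ)
    {σ : ℝ} (hσ : 0 ≤ σ) (h : ∫ i, f i ^ 2 ∂μ ≤ σ ^ 2) : ∫ i, f i ∂μ ≤ σ := by
  have hjensen : (∫ i, f i ∂μ) ^ 2 ≤ ∫ i, f i ^ 2 ∂μ := by
    have := ProbabilityTheory.variance_nonneg f μ
    rw [ProbabilityTheory.variance_eq_sub hf] at this
    simpa using this
  exact abs_le_of_sq_le_sq' (hjensen.trans h) hσ |>.2

theorem integral_norm_le_of_integral_norm_sub_sq_le [IsProbabilityMeasure μ] {g : I → E}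
    (hg : MemLp g 2 μ) (c : E) {σ : ℝ} (hσ : 0 ≤ σ) (h : ∫ i, ‖g i - c‖ ^ 2 ∂μ ≤ σ ^ 2) :
    ∫ i, ‖g i‖ ∂μ ≤ σ + ‖c‖ := by
  have hgc : MemLp (fun i => g i - c) 2 μ := hg.sub (memLp_const c)
  have hdev : ∫ i, ‖g i - c‖ ∂μ ≤ σ := integral_le_of_integral_sq_le hgc.norm hσ h
  calc ∫ i, ‖g i‖ ∂μ ≤ ∫ i, (‖g i - c‖ + ‖c‖) ∂μ :=
        integral_mono (hg.integrable one_le_two).norm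
          ((hgc.integrable one_le_two).norm.add (integrable_const _))
          fun i => norm_le_norm_sub_add (g i) c
    _ ≤ σ + ‖c‖ := by
        rw [integral_add (hgc.integrable one_le_two).norm (integrable_const _)]
        simpa using hdev

end Integral

theorem integral_norm_metaGrad_sub_gradient_le {I : Type*} [MeasurableSpace I] {μ : Measure I}
    {d : ℕ} {α L : ℝ} (hα : 0 ≤ α) (hL : 0 ≤ L) (N : ℕ) {lS lT : I → EuclideanSpace ℝ (Fin d) → ℝ}
    (hlipS : ∀ i x y, ‖gradient (lS i) x - gradient (lS i) y‖ ≤ L * ‖x - y‖)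
    (hlipT : ∀ i x y, ‖gradient (lT i) x - gradient (lT i) y‖ ≤ L * ‖x - y‖)
    {b : I → ℝ} (hb : Integrable b μ) (hST : ∀ i v, ‖gradient (lS i) v - gradient (lT i) v‖ ≤ b i)
    {w : EuclideanSpace ℝ (Fin d)} (hgT : Integrable (fun i => gradient (lT i) w) μ) :
    ∫ i, ‖metaGrad α N (lS i) (lT i) w - gradient (lT i) w‖ ∂μ ≤
      ((1 + α * L) ^ (2 * N) - 1) * ∫ i, ‖gradient (lT i) w‖ ∂μ +
        (1 + α * L) ^ N * ((1 + α * L) ^ N - 1) * ∫ i, b i ∂μ := by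
  rw [← integral_const_mul, ← integral_const_mul, ← integral_add]
  · exact integral_mono_of_nonneg (.of_forall fun i => norm_nonneg _)
      ((hgT.norm.const_mul _).add (hb.const_mul _))
      (.of_forall fun i => norm_metaGrad_sub_gradient_le hα hL N (hlipS i) (hlipT i) (hST i) w)
  · exact hgT.norm.const_mul _
  · exact hb.const_mul _

theorem stmt16_general {d : ℕ} (α L σ : ℝ) (hα : 0 < α) (hL : 0 < L) (hσ : 0 < σ)
    (N : ℕ) (hN : 1 ≤ N)
    (hαsmall : α < ((2 : ℝ) ^ ((1 : ℝ) / (2 * (N : ℝ))) - 1) / L)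
    {I : Type*} [MeasurableSpace I] (μ : Measure I) [IsProbabilityMeasure μ]
    (lS lT : I → EuclideanSpace ℝ (Fin d) → ℝ)
    (hgradS : ∀ i, ∀ w u : EuclideanSpace ℝ (Fin d),
      ‖gradient (lS i) w - gradient (lS i) u‖ ≤ L * ‖w - u‖)
    (hgradT : ∀ i, ∀ w u : EuclideanSpace ℝ (Fin d),
      ‖gradient (lT i) w - gradient (lT i) u‖ ≤ L * ‖w - u‖)
    (b : I → ℝ) (hbint : Integrable b μ)
    (hdiffb : ∀ i, ∀ v : EuclideanSpace ℝ (Fin d),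
      ‖gradient (lS i) v - gradient (lT i) v‖ ≤ b i)
    (hgTint : ∀ w : EuclideanSpace ℝ (Fin d), Integrable (fun i => gradient (lT i) w) μ)
    (hgT2int : ∀ w : EuclideanSpace ℝ (Fin d),
      Integrable (fun i => ‖gradient (lT i) w‖ ^ 2) μ)
    (hGint : ∀ w : EuclideanSpace ℝ (Fin d),
      Integrable (fun i => metaGrad α N (lS i) (lT i) w) μ)
    (hvar : ∀ w : EuclideanSpace ℝ (Fin d),
      (∫ i, ‖gradient (lT i) w - ∫ i', gradient (lT i') w ∂μ‖ ^ 2 ∂μ) ≤ σ ^ 2) :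
    ∀ w : EuclideanSpace ℝ (Fin d),
      ‖∫ i, gradient (lT i) w ∂μ‖ ≤
        (1 / (2 - (1 + α * L) ^ (2 * N))) * ‖∫ i, metaGrad α N (lS i) (lT i) w ∂μ‖ +
          (((1 + α * L) ^ (2 * N) - 1) * σ +
              (1 + α * L) ^ N * ((1 + α * L) ^ N - 1) * (∫ i, b i ∂μ)) /
            (2 - (1 + α * L) ^ (2 * N)) := by
  intro w
  have hρ2 : (1 + α * L) ^ (2 * N) < 2 := one_add_mul_pow_two_mul_lt_two hα.le hL hN hαsmall
  have hρ1 : 1 ≤ (1 + α * L) ^ (2 * N) := one_le_pow₀ (by nlinarith)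
  have hmeta := norm_integral_le_norm_integral_add_integral_norm_sub (hGint w) (hgTint w)
  have hdev := integral_norm_metaGrad_sub_gradient_le hα.le hL.le N hgradS hgradT hbint hdiffb
    (hgTint w)
  have hmean := integral_norm_le_of_integral_norm_sub_sq_le
    ((memLp_two_iff_integrable_sq_norm (hgTint w).aestronglyMeasurable).2 (hgT2int w)) _ hσ.le
    (hvar w)
  rw [one_div_mul_eq_div, ← add_div, le_div_iff₀ (by linarith)]
  linarith [mul_le_mul_of_nonneg_left hmean (sub_nonneg.2 hρ1)]

theorem stmt16 {d : ℕ} (hd : 1 ≤ d) (α L σ : ℝ) (hα : 0 < α) (hL : 0 < L) (hσ : 0 < σ)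
    (N : ℕ) (hN : 1 ≤ N)
    (hαsmall : α < ((2 : ℝ) ^ ((1 : ℝ) / (2 * (N : ℝ))) - 1) / L)
    {I : Type*} [MeasurableSpace I] (μ : Measure I) [IsProbabilityMeasure μ]
    (lS lT : I → EuclideanSpace ℝ (Fin d) → ℝ)
    (hlS : ∀ i, ContDiff ℝ 2 (lS i)) (hlT : ∀ i, ContDiff ℝ 2 (lT i))
    (hgradS : ∀ i, ∀ w u : EuclideanSpace ℝ (Fin d),
      ‖gradient (lS i) w - gradient (lS i) u‖ ≤ L * ‖w - u‖)
    (hgradT : ∀ i, ∀ w u : EuclideanSpace ℝ (Fin d),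
      ‖gradient (lT i) w - gradient (lT i) u‖ ≤ L * ‖w - u‖)
    (b : I → ℝ) (hbnn : ∀ i, 0 ≤ b i) (hbint : Integrable b μ)
    (hdiffb : ∀ i, ∀ v : EuclideanSpace ℝ (Fin d),
      ‖gradient (lS i) v - gradient (lT i) v‖ ≤ b i)
    (hgTint : ∀ w : EuclideanSpace ℝ (Fin d), Integrable (fun i => gradient (lT i) w) μ)
    (hgT2int : ∀ w : EuclideanSpace ℝ (Fin d),
      Integrable (fun i => ‖gradient (lT i) w‖ ^ 2) μ)
    (hgTnint : ∀ w : EuclideanSpace ℝ (Fin d),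
      Integrable (fun i => ‖gradient (lT i) w‖) μ)
    (hGint : ∀ w : EuclideanSpace ℝ (Fin d),
      Integrable (fun i => metaGrad α N (lS i) (lT i) w) μ)
    (hvar : ∀ w : EuclideanSpace ℝ (Fin d),
      (∫ i, ‖gradient (lT i) w - ∫ i', gradient (lT i') w ∂μ‖ ^ 2 ∂μ) ≤ σ ^ 2) :
    ∀ w : EuclideanSpace ℝ (Fin d),
      ‖∫ i, gradient (lT i) w ∂μ‖ ≤
        (1 / (2 - (1 + α * L) ^ (2 * N))) * ‖∫ i, metaGrad α N (lS i) (lT i) w ∂μ‖ +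
          (((1 + α * L) ^ (2 * N) - 1) * σ +
              (1 + α * L) ^ N * ((1 + α * L) ^ N - 1) * (∫ i, b i ∂μ)) /
            (2 - (1 + α * L) ^ (2 * N)) :=
  stmt16_general α L σ hα hL hσ N hN hαsmall μ lS lT hgradS hgradT b hbint hdiffb hgTint hgT2int
    hGint hvar
end
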